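/- Let d ≥ 1 be an integer and let c_d = c_{d,α_d} with α_d = 1 when d is even and α_d = π/2 when d is odd. Then there exists a constant C > 0 such that for every s ∈ [0,1], every k ∈ ℕ and every t ≥ 0, |c_d^{(k)}(t)| ≤ C^{1+k} (k!)^{(1+s)/2} (1+t)^{−1−sk}. -/

import Mathlib

open scoped Nat

/-- The function `c_{d,α}` of the paper: the candidate (rescaled radial profile of the)
Weyl symbol of the inverse of the harmonic oscillator, depending on a parameter `α`. -/
noncomputable def cda (d : ℕ) (α : ℝ) (t : ℝ) : ℝ :=
  ((d‼ : ℝ) / d) *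
    (α * (∑' p : ℕ, t ^ (2*p) / (((2*p)‼ * (2*p + d - 1)‼ : ℕ) : ℝ)) -
      ∑' p : ℕ, t ^ (2*p+1) / (((2*p+1)‼ * (2*p + d)‼ : ℕ) : ℝ))

/-
Expanding `exp (-t sin θ)` and integrating termwise shows
`c_d(t) = ∫₀^{π/2} exp (-t sin θ) cos^{d-1} θ dθ`: the Taylor coefficients of the right-hand side
are the Wallis integrals `∫₀^{π/2} sin^n θ cos^{d-1} θ dθ`, and the choice of `α_d` is exactly the
factor `π/2` that these integrals carry when `n` and `d - 1` are both even.
Hence `(-1)^k c_d^{(k)}(t) = G_k(t) := ∫₀^{π/2} sin^k θ exp (-t sin θ) cos^{d-1} θ dθ ≥ 0`.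
Trivially `G_k ≤ G_0 ≤ π/2`, and Jordan's inequality `sin θ ≥ 2θ/π` gives
`G_k(t) ≤ k! (π/t)^{k+1}`; so with `X = 2π/(1+t)` both `G_k ≤ X` and `G_k ≤ k! X^{k+1}` hold,
and the geometric mean `G_k ≤ X^{1-s} (k! X^{k+1})^s = (k!)^s X^{1+sk}` is the claimed bound.
-/

open Real intervalIntegral

noncomputable section

def sinCosMoment (n e : ℕ) : ℝ := ∫ θ in (0:ℝ)..π / 2, sin θ ^ n * cos θ ^ e

-- `(n - 1)‼` truncates to `0‼ = 1` at `n = 0`, the usual convention `(-1)‼ = 1`.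
def wallisValue (n e : ℕ) : ℝ :=
  ((n - 1)‼ * (e - 1)‼ : ℕ) / ((n + e)‼ : ℕ) * (if Even n ∧ Even e then π / 2 else 1)

theorem sinCosMoment_comm (n e : ℕ) : sinCosMoment n e = sinCosMoment e n := by
  have h := integral_comp_sub_left (a := 0) (b := π / 2)
    (fun θ => sin θ ^ e * cos θ ^ n) (π / 2)
  simp only [sin_pi_div_two_sub, cos_pi_div_two_sub, sub_self, sub_zero] at h
  rw [sinCosMoment, sinCosMoment, ← h]
  exact integral_congr fun θ _ => mul_comm _ _

theorem sinCosMoment_zero_zero : sinCosMoment 0 0 = π / 2 := by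
  simp [sinCosMoment]

theorem sinCosMoment_one (e : ℕ) : sinCosMoment 1 e = 1 / (e + 1) := by
  have hderiv (θ : ℝ) :
      HasDerivAt (fun θ => -cos θ ^ (e + 1) / (e + 1)) (sin θ ^ 1 * cos θ ^ e) θ := by
    refine (((hasDerivAt_cos θ).fun_pow (e + 1)).fun_neg.div_const ((e : ℝ) + 1)).congr_deriv ?_
    field_simp
    push_cast
    ring
  rw [sinCosMoment, integral_eq_sub_of_hasDerivAt (fun θ _ => hderiv θ)
    (Continuous.intervalIntegrable (by fun_prop) _ _)]
  simp only [cos_pi_div_two, cos_zero, one_pow, zero_pow (Nat.succ_ne_zero e)]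
  ring

theorem sinCosMoment_add_two (n e : ℕ) :
    ((n : ℝ) + e + 2) * sinCosMoment (n + 2) e = (n + 1) * sinCosMoment n e := by
  have hderiv (θ : ℝ) : HasDerivAt (fun θ => sin θ ^ (n + 1) * cos θ ^ (e + 1))
      ((n + 1) * (sin θ ^ n * cos θ ^ e) - (n + e + 2) * (sin θ ^ (n + 2) * cos θ ^ e)) θ := by
    refine (((hasDerivAt_sin θ).fun_pow (n + 1)).fun_mul
      ((hasDerivAt_cos θ).fun_pow (e + 1))).congr_deriv ?_
    push_cast
    linear_combination (n + 1 : ℝ) * sin θ ^ n * cos θ ^ e * sin_sq_add_cos_sq θ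
  have hint (m : ℕ) :
      IntervalIntegrable (fun θ => sin θ ^ m * cos θ ^ e) MeasureTheory.volume 0 (π / 2) :=
    Continuous.intervalIntegrable (by fun_prop) _ _
  have h := integral_eq_sub_of_hasDerivAt (fun θ _ => hderiv θ)
    (((hint n).const_mul _).sub ((hint (n + 2)).const_mul _))
  rw [integral_sub ((hint n).const_mul _) ((hint (n + 2)).const_mul _), integral_const_mul,
    integral_const_mul] at h
  simp only [sin_pi_div_two, cos_pi_div_two, sin_zero, cos_zero, one_pow,
    zero_pow (Nat.succ_ne_zero _), mul_zero, mul_one, sub_self] at h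
  rw [sinCosMoment, sinCosMoment]
  linarith

theorem wallisValue_add_two (n e : ℕ) :
    ((n : ℝ) + e + 2) * wallisValue (n + 2) e = (n + 1) * wallisValue n e := by
  have hpar : Even (n + 2) ↔ Even n := by simp [Nat.even_add]
  simp only [wallisValue, hpar, show n + 2 - 1 = n + 1 by omega,
    show n + 2 + e = n + e + 2 by omega,
    Nat.doubleFactorial_add_two, Nat.doubleFactorial_add_one]
  have : ((n + e)‼ : ℝ) ≠ 0 := by positivity
  push_cast
  field_simp

theorem sinCosMoment_eq_of_zero {e : ℕ} (h0 : sinCosMoment 0 e = wallisValue 0 e) (n : ℕ) :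
    sinCosMoment n e = wallisValue n e := by
  induction n using Nat.twoStepInduction with
  | zero => exact h0
  | one =>
    rw [sinCosMoment_one, wallisValue, add_comm 1 e, Nat.doubleFactorial_add_one]
    have : ((e - 1)‼ : ℝ) ≠ 0 := by positivity
    simp only [Nat.sub_self, Nat.doubleFactorial, Nat.not_even_one, false_and, if_false,
      mul_one, one_mul]
    push_cast
    field_simp
  | more n ih _ =>
    have hpos : (n : ℝ) + e + 2 ≠ 0 := by positivity
    apply mul_left_cancel₀ hpos
    rw [sinCosMoment_add_two, wallisValue_add_two, ih]

theorem sinCosMoment_eq (n e : ℕ) : sinCosMoment n e = wallisValue n e := by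
  have hzero : ∀ m, sinCosMoment m 0 = wallisValue m 0 :=
    sinCosMoment_eq_of_zero (by simp [sinCosMoment_zero_zero, wallisValue])
  refine sinCosMoment_eq_of_zero ?_ n
  rw [sinCosMoment_comm, hzero, wallisValue, wallisValue]
  simp [and_comm, add_comm]

def expSinIntegral (e k : ℕ) (t : ℝ) : ℝ :=
  ∫ θ in (0:ℝ)..π / 2, sin θ ^ k * exp (-(t * sin θ)) * cos θ ^ e

theorem hasSum_expSinIntegral_zero (e : ℕ) (t : ℝ) :
    HasSum (fun n => (-t) ^ n / n ! * sinCosMoment n e) (expSinIntegral e 0 t) := by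
  have hterm (n : ℕ) : ∫ θ in (0:ℝ)..π / 2, (-(t * sin θ)) ^ n / n ! * cos θ ^ e
      = (-t) ^ n / n ! * sinCosMoment n e := by
    rw [sinCosMoment, ← integral_const_mul]
    exact integral_congr fun θ _ => by ring
  have hbound (n : ℕ) (θ : ℝ) : ‖(-(t * sin θ)) ^ n / n ! * cos θ ^ e‖ ≤ |t| ^ n / n ! := by
    simp only [norm_mul, norm_div, norm_pow, norm_neg, mul_pow, Real.norm_eq_abs, Nat.abs_cast]
    have hsin := pow_le_one₀ (abs_nonneg _) (abs_sin_le_one θ) (n := n)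
    have hcos := pow_le_one₀ (abs_nonneg _) (abs_cos_le_one θ) (n := e)
    calc |t| ^ n * |sin θ| ^ n / n ! * |cos θ| ^ e ≤ |t| ^ n * 1 / n ! * 1 := by gcongr
      _ = |t| ^ n / n ! := by ring
  have hexp (θ : ℝ) : HasSum (fun n => (-(t * sin θ)) ^ n / n ! * cos θ ^ e)
      (sin θ ^ 0 * exp (-(t * sin θ)) * cos θ ^ e) := by
    rw [pow_zero, one_mul, exp_eq_exp_ℝ]
    exact (NormedSpace.expSeries_div_hasSum_exp (𝔸 := ℝ) (-(t * sin θ))).mul_right (cos θ ^ e)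
  have h := hasSum_integral_of_dominated_convergence (μ := MeasureTheory.volume) (a := 0)
    (b := π / 2) (F := fun n θ => (-(t * sin θ)) ^ n / n ! * cos θ ^ e) (fun n _ => |t| ^ n / n !)
    (fun n => Continuous.aestronglyMeasurable (by fun_prop))
    (fun n => .of_forall fun θ _ => hbound n θ)
    (.of_forall fun _ _ => summable_pow_div_factorial |t|) intervalIntegrable_const
    (.of_forall fun θ _ => hexp θ)
  simpa only [hterm, expSinIntegral] using h

theorem sinCosMoment_div_factorial (n e : ℕ) :
    sinCosMoment n e / n ! =
      (e + 1)‼ / (e + 1) * (if Even n ∧ Even e then π / 2 else 1) / (n‼ * (n + e)‼ : ℕ) := by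
  rw [sinCosMoment_eq, wallisValue, Nat.doubleFactorial_add_one]
  generalize (if Even n ∧ Even e then π / 2 else 1) = c
  have : ((n + e)‼ : ℝ) ≠ 0 := by positivity
  cases n with
  | zero =>
    simp only [zero_tsub, zero_add, Nat.doubleFactorial, Nat.factorial_zero, one_mul]
    push_cast
    field_simp
  | succ m =>
    rw [Nat.factorial_eq_mul_doubleFactorial]
    simp only [Nat.add_sub_cancel]
    push_cast
    field_simp

theorem cda_eq_expSinIntegral (e : ℕ) (t : ℝ) :
    cda (e + 1) (if Even (e + 1) then 1 else π / 2) t = expSinIntegral e 0 t := by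
  have hf := hasSum_expSinIntegral_zero e t
  set f := fun n => (-t) ^ n / n ! * sinCosMoment n e
  have heven (p : ℕ) : f (2 * p) = (e + 1)‼ / (e + 1) *
      ((if Even (e + 1) then 1 else π / 2) *
        (t ^ (2 * p) / (((2 * p)‼ * (2 * p + (e + 1) - 1)‼ : ℕ) : ℝ))) := by
    have hp : Even (2 * p) := even_two_mul p
    have : f (2 * p) = t ^ (2 * p) * (sinCosMoment (2 * p) e / (2 * p)!) := by
      simp only [f, hp.neg_pow]; ring
    rw [this, sinCosMoment_div_factorial]
    simp only [Nat.even_add_one, hp, true_and, show 2 * p + (e + 1) - 1 = 2 * p + e by omega,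
      ite_not]
    ring
  have hodd (p : ℕ) : f (2 * p + 1) = -((e + 1)‼ / (e + 1) *
        (t ^ (2 * p + 1) / (((2 * p + 1)‼ * (2 * p + (e + 1))‼ : ℕ) : ℝ))) := by
    have hp : Odd (2 * p + 1) := odd_two_mul_add_one p
    have : f (2 * p + 1) = -(t ^ (2 * p + 1) * (sinCosMoment (2 * p + 1) e / (2 * p + 1)!)) := by
      simp only [f, hp.neg_pow]; ring
    rw [this, sinCosMoment_div_factorial]
    simp only [Nat.not_even_iff_odd.mpr hp, false_and, if_false,
      show 2 * p + 1 + e = 2 * p + (e + 1) by omega]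
    ring
  have hinj : Function.Injective (2 * · : ℕ → ℕ) := mul_right_injective₀ two_ne_zero
  rw [← hf.tsum_eq, ← tsum_even_add_odd (hf.summable.comp_injective hinj)
    (hf.summable.comp_injective ((add_left_injective 1).comp hinj)), cda, tsum_congr heven,
    tsum_congr hodd, tsum_neg, tsum_mul_left, tsum_mul_left, tsum_mul_left,
    Nat.cast_add_one]
  ring

theorem hasDerivAt_expSinIntegral (e k : ℕ) (t : ℝ) :
    HasDerivAt (expSinIntegral e k) (-expSinIntegral e (k + 1) t) t := by
  have hbound (θ x : ℝ) (hx : x ∈ Metric.ball t 1) :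
      ‖-(sin θ ^ (k + 1) * exp (-(x * sin θ)) * cos θ ^ e)‖ ≤ exp (|t| + 1) := by
    have hx' : |x| ≤ |t| + 1 := by
      have := abs_sub_abs_le_abs_sub x t
      rw [Metric.mem_ball, Real.dist_eq] at hx
      linarith
    have hexp : -(x * sin θ) ≤ |t| + 1 := by
      have := mul_le_of_le_one_right (abs_nonneg x) (abs_sin_le_one θ)
      have := neg_abs_le (x * sin θ)
      rw [abs_mul] at this
      linarith
    simp only [norm_neg, norm_mul, norm_pow, Real.norm_eq_abs, abs_exp]
    calc |sin θ| ^ (k + 1) * exp (-(x * sin θ)) * |cos θ| ^ e ≤ 1 * exp (|t| + 1) * 1 := by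
          gcongr
          · exact pow_le_one₀ (abs_nonneg _) (abs_sin_le_one θ)
          · exact pow_le_one₀ (abs_nonneg _) (abs_cos_le_one θ)
      _ = exp (|t| + 1) := by ring
  have hderiv (θ x : ℝ) : HasDerivAt (fun x => sin θ ^ k * exp (-(x * sin θ)) * cos θ ^ e)
      (-(sin θ ^ (k + 1) * exp (-(x * sin θ)) * cos θ ^ e)) x := by
    have hlin : HasDerivAt (fun x => -(x * sin θ)) (-sin θ) x := by
      simpa using ((hasDerivAt_id x).mul_const (sin θ)).fun_neg
    refine ((hlin.exp.const_mul (sin θ ^ k)).mul_const (cos θ ^ e)).congr_deriv ?_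
    ring
  have h := hasDerivAt_integral_of_dominated_loc_of_deriv_le (μ := MeasureTheory.volume)
    (a := 0) (b := π / 2) (Metric.ball_mem_nhds t one_pos)
    (.of_forall fun x => Continuous.aestronglyMeasurable (by fun_prop))
    (Continuous.intervalIntegrable (by fun_prop) _ _)
    (Continuous.aestronglyMeasurable (by fun_prop))
    (.of_forall fun θ _ x hx => hbound θ x hx) intervalIntegrable_const
    (.of_forall fun θ _ x _ => hderiv θ x)
  rw [integral_neg] at h
  exact h.2

theorem iteratedDeriv_expSinIntegral (e k : ℕ) :
    iteratedDeriv k (expSinIntegral e 0) = fun t => (-1) ^ k * expSinIntegral e k t := by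
  induction k with
  | zero => simp
  | succ k ih =>
    ext t
    rw [iteratedDeriv_succ, ih,
      (((hasDerivAt_expSinIntegral e k t).const_mul ((-1) ^ k))).deriv]
    ring

theorem sin_nonneg_and_cos_nonneg_of_mem_Icc {θ : ℝ} (hθ : θ ∈ Set.Icc 0 (π / 2)) :
    0 ≤ sin θ ∧ 0 ≤ cos θ :=
  ⟨sin_nonneg_of_nonneg_of_le_pi hθ.1 (by linarith [hθ.2, pi_pos]),
    cos_nonneg_of_mem_Icc ⟨by linarith [hθ.1, pi_pos], hθ.2⟩⟩

theorem expSinIntegral_nonneg (e k : ℕ) (t : ℝ) : 0 ≤ expSinIntegral e k t := by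
  refine integral_nonneg (by positivity) fun θ hθ => ?_
  obtain ⟨hsin, hcos⟩ := sin_nonneg_and_cos_nonneg_of_mem_Icc hθ
  positivity

theorem abs_iteratedDeriv_cda (e k : ℕ) (t : ℝ) :
    |iteratedDeriv k (cda (e + 1) (if Even (e + 1) then 1 else π / 2)) t| =
      expSinIntegral e k t := by
  rw [funext (cda_eq_expSinIntegral e), iteratedDeriv_expSinIntegral, abs_mul, abs_pow, abs_neg,
    abs_one, one_pow, one_mul, abs_of_nonneg (expSinIntegral_nonneg e k t)]

theorem expSinIntegral_le_integral {e k : ℕ} {t : ℝ} {f : ℝ → ℝ} (hf : Continuous f)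
    (h : ∀ θ ∈ Set.Icc 0 (π / 2), sin θ ^ k * exp (-(t * sin θ)) ≤ f θ) :
    expSinIntegral e k t ≤ ∫ θ in (0:ℝ)..π / 2, f θ := by
  refine integral_mono_on (by positivity) (Continuous.intervalIntegrable (by fun_prop) _ _)
    (hf.intervalIntegrable _ _) fun θ hθ => ?_
  obtain ⟨hsin, hcos⟩ := sin_nonneg_and_cos_nonneg_of_mem_Icc hθ
  calc sin θ ^ k * exp (-(t * sin θ)) * cos θ ^ e ≤ sin θ ^ k * exp (-(t * sin θ)) * 1 := by
        gcongr
        exact pow_le_one₀ hcos (cos_le_one θ)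
    _ ≤ f θ := by rw [mul_one]; exact h θ hθ

theorem expSinIntegral_le_pi_div_two (e k : ℕ) {t : ℝ} (ht : 0 ≤ t) :
    expSinIntegral e k t ≤ π / 2 := by
  refine (expSinIntegral_le_integral (f := fun _ => 1) continuous_const fun θ hθ => ?_).trans_eq
    (by simp)
  obtain ⟨hsin, -⟩ := sin_nonneg_and_cos_nonneg_of_mem_Icc hθ
  calc sin θ ^ k * exp (-(t * sin θ)) ≤ 1 * 1 := by
        gcongr
        · exact pow_le_one₀ hsin (sin_le_one θ)
        · exact exp_le_one_iff.mpr (by nlinarith)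
    _ = 1 := one_mul 1

theorem expSinIntegral_le_expSinIntegral_zero (e k : ℕ) (t : ℝ) :
    expSinIntegral e k t ≤ expSinIntegral e 0 t := by
  refine integral_mono_on (by positivity) (Continuous.intervalIntegrable (by fun_prop) _ _)
    (Continuous.intervalIntegrable (by fun_prop) _ _) fun θ hθ => ?_
  obtain ⟨hsin, hcos⟩ := sin_nonneg_and_cos_nonneg_of_mem_Icc hθ
  rw [pow_zero]
  gcongr
  exact pow_le_one₀ hsin (sin_le_one θ)

theorem pow_mul_exp_neg_mul_le (k : ℕ) {t u : ℝ} (ht : 0 < t) (hu : 0 ≤ u) :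
    u ^ k * exp (-(t * u)) ≤ k ! * (2 / t) ^ k * exp (-(t * u / 2)) := by
  have hfac := pow_div_factorial_le_exp _ (by positivity : 0 ≤ t * u / 2) k
  rw [div_le_iff₀ (by positivity)] at hfac
  have hu' : u ^ k = (2 / t) ^ k * (t * u / 2) ^ k := by
    rw [← mul_pow]; field_simp
  have hexp : exp (-(t * u)) = exp (-(t * u / 2)) * exp (-(t * u / 2)) := by
    rw [← exp_add]; ring_nf
  calc u ^ k * exp (-(t * u))
      = (2 / t) ^ k * (t * u / 2) ^ k * exp (-(t * u / 2)) * exp (-(t * u / 2)) := by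
        rw [hu', hexp]; ring
    _ ≤ (2 / t) ^ k * (exp (t * u / 2) * k !) * exp (-(t * u / 2)) * exp (-(t * u / 2)) := by
        gcongr
    _ = k ! * (2 / t) ^ k * exp (-(t * u / 2)) := by
        have hinv : exp (t * u / 2) * exp (-(t * u / 2)) = 1 := by rw [← exp_add]; simp
        linear_combination ((2 / t) ^ k * k ! * exp (-(t * u / 2))) * hinv

theorem integral_exp_neg_mul_le {c : ℝ} (hc : 0 < c) (b : ℝ) :
    ∫ θ in (0:ℝ)..b, exp (-(c * θ)) ≤ 1 / c := by
  have h := integral_comp_mul_left (a := 0) (b := b) (fun x => exp x) (neg_ne_zero.mpr hc.ne')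
  simp only [neg_mul, mul_zero, integral_exp, exp_zero, smul_eq_mul] at h
  rw [h, inv_neg, neg_mul, ← mul_neg, neg_sub, one_div]
  exact mul_le_of_le_one_right (inv_nonneg.mpr hc.le) (by linarith [exp_pos (-(c * b))])

theorem expSinIntegral_le_factorial_mul_pow (e k : ℕ) {t : ℝ} (ht : 0 < t) :
    expSinIntegral e k t ≤ k ! * (π / t) ^ (k + 1) := by
  refine (expSinIntegral_le_integral (f := fun θ => k ! * (2 / t) ^ k * exp (-(t / π * θ)))
    (by fun_prop) fun θ hθ => ?_).trans ?_
  · obtain ⟨hsin, -⟩ := sin_nonneg_and_cos_nonneg_of_mem_Icc hθ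
    have hjordan := mul_le_sin hθ.1 hθ.2
    calc sin θ ^ k * exp (-(t * sin θ)) ≤ k ! * (2 / t) ^ k * exp (-(t * sin θ / 2)) :=
          pow_mul_exp_neg_mul_le k ht hsin
      _ ≤ k ! * (2 / t) ^ k * exp (-(t / π * θ)) := by
          gcongr
          calc t / π * θ = t * (2 / π * θ) / 2 := by ring
            _ ≤ t * sin θ / 2 := by gcongr
  calc ∫ θ in (0:ℝ)..π / 2, k ! * (2 / t) ^ k * exp (-(t / π * θ))
      = k ! * (2 / t) ^ k * ∫ θ in (0:ℝ)..π / 2, exp (-(t / π * θ)) := integral_const_mul _ _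
    _ ≤ k ! * (2 / t) ^ k * (π / t) := by
        gcongr
        simpa using integral_exp_neg_mul_le (by positivity : 0 < t / π) (π / 2)
    _ ≤ k ! * (π / t) ^ k * (π / t) := by
        gcongr
        linarith [pi_gt_three]
    _ = k ! * (π / t) ^ (k + 1) := by ring

theorem expSinIntegral_le_factorial_mul_pow_one_add (e k : ℕ) {t : ℝ} (ht : 0 ≤ t) :
    expSinIntegral e k t ≤ k ! * (2 * π / (1 + t)) ^ (k + 1) := by
  rcases le_or_gt t 1 with ht1 | ht1
  · have hπ : π ≤ 2 * π / (1 + t) := by rw [le_div_iff₀ (by positivity)]; nlinarith [pi_pos]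
    calc expSinIntegral e k t ≤ π / 2 := expSinIntegral_le_pi_div_two e k ht
      _ ≤ 1 * π ^ (k + 1) := by
          rw [one_mul]
          linarith [le_self_pow₀ (by linarith [pi_gt_three] : 1 ≤ π) (by omega : k + 1 ≠ 0), pi_pos]
      _ ≤ k ! * (2 * π / (1 + t)) ^ (k + 1) := by
          gcongr
          exact_mod_cast k.factorial_pos
  · calc expSinIntegral e k t ≤ k ! * (π / t) ^ (k + 1) :=
        expSinIntegral_le_factorial_mul_pow e k (by linarith)
      _ ≤ k ! * (2 * π / (1 + t)) ^ (k + 1) := by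
          gcongr k ! * ?_ ^ _
          rw [div_le_div_iff₀ (by linarith) (by linarith)]
          nlinarith [pi_pos]

theorem le_rpow_mul_rpow_of_le_of_le {g a b s : ℝ} (hg : 0 ≤ g) (ha : g ≤ a) (hb : g ≤ b)
    (hs0 : 0 ≤ s) (hs1 : s ≤ 1) : g ≤ a ^ (1 - s) * b ^ s := by
  calc g = g ^ (1 - s) * g ^ s := by rw [← rpow_add' hg (by norm_num), sub_add_cancel, rpow_one]
    _ ≤ a ^ (1 - s) * b ^ s :=
        mul_le_mul (rpow_le_rpow hg ha (by linarith)) (rpow_le_rpow hg hb hs0) (by positivity)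
          (rpow_nonneg (hg.trans ha) _)

theorem le_rpow_mul_rpow_of_le_of_le_mul_pow {g X K s : ℝ} {k : ℕ} (hg : 0 ≤ g) (hX : g ≤ X)
    (hK0 : 0 ≤ K) (hK : g ≤ K * X ^ (k + 1)) (hs0 : 0 ≤ s) (hs1 : s ≤ 1) :
    g ≤ K ^ s * X ^ (1 + s * k) := by
  have hX0 : 0 ≤ X := hg.trans hX
  have hexp : 1 - s + ((k + 1 : ℕ) : ℝ) * s = 1 + s * k := by push_cast; ring
  calc g ≤ X ^ (1 - s) * (K * X ^ (k + 1)) ^ s := le_rpow_mul_rpow_of_le_of_le hg hX hK hs0 hs1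
    _ = K ^ s * X ^ (1 + s * k) := by
        rw [mul_rpow hK0 (by positivity), ← rpow_natCast, ← rpow_mul hX0, mul_left_comm,
          ← rpow_add' hX0 (by rw [hexp]; positivity), hexp]

theorem div_rpow_le_pow_mul_rpow_neg {C y a : ℝ} {b : ℕ} (hC : 1 ≤ C) (hy : 0 < y)
    (hab : a ≤ b) : (C / y) ^ a ≤ C ^ b * y ^ (-a) := by
  rw [div_rpow (by linarith) hy.le, rpow_neg hy.le, div_eq_mul_inv, ← rpow_natCast]
  gcongr

end

theorem stmt11 (d : ℕ) (hd : 1 ≤ d) :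
    ∃ C : ℝ, 0 < C ∧ ∀ s ∈ Set.Icc (0:ℝ) 1, ∀ (k : ℕ) (t : ℝ), 0 ≤ t →
      |iteratedDeriv k (cda d (if Even d then (1:ℝ) else Real.pi / 2)) t|
        ≤ C ^ (1 + k) * ((k ! : ℝ)) ^ ((1 + s) / 2) * (1 + t) ^ (-(1:ℝ) - s * k) := by
  obtain ⟨e, rfl⟩ := Nat.exists_eq_add_of_le' hd
  refine ⟨2 * π, by positivity, fun s ⟨hs0, hs1⟩ k t ht => ?_⟩
  have hfac : (1 : ℝ) ≤ k ! := by exact_mod_cast k.factorial_pos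
  have hG0 : expSinIntegral e k t ≤ 2 * π / (1 + t) := by
    simpa using (expSinIntegral_le_expSinIntegral_zero e k t).trans
      (expSinIntegral_le_factorial_mul_pow_one_add e 0 ht)
  rw [abs_iteratedDeriv_cda]
  calc expSinIntegral e k t ≤ (k ! : ℝ) ^ s * (2 * π / (1 + t)) ^ (1 + s * k) :=
        le_rpow_mul_rpow_of_le_of_le_mul_pow (expSinIntegral_nonneg e k t) hG0 (by positivity)
          (expSinIntegral_le_factorial_mul_pow_one_add e k ht) hs0 hs1
    _ ≤ (k ! : ℝ) ^ ((1 + s) / 2) * ((2 * π) ^ (1 + k) * (1 + t) ^ (-(1 + s * k))) := by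
        refine mul_le_mul (rpow_le_rpow_of_exponent_le hfac (by linarith))
          (div_rpow_le_pow_mul_rpow_neg (by linarith [pi_gt_three]) (by linarith) ?_)
          (by positivity) (by positivity)
        push_cast
        linarith [mul_le_of_le_one_left (Nat.cast_nonneg (α := ℝ) k) hs1]
    _ = (2 * π) ^ (1 + k) * (k ! : ℝ) ^ ((1 + s) / 2) * (1 + t) ^ (-(1:ℝ) - s * k) := by
        rw [neg_add']
        ring
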